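/- arXiv:math/0605105 — 3 statements merged into one kernel-verified Lean document; each statement's English description precedes it below -/
import Mathlib

section
/- Let v lie in the closed ball of radius R centered at v*, write Δ = ‖v − v*‖ and J = J(v), and suppose J is invertible. Let E be a continuous linear operator on ℂⁿ with ‖J⁻¹‖·‖E‖ < 1, let e ∈ ℂⁿ, and let d ∈ ℂⁿ satisfy (J + E)d = −(F(v) + e). Then ‖v − v* + d‖ ≤ K·‖J⁻¹‖·(‖E‖·Δ + (α + β)·Δ² + ‖e‖), where K = 1/(1 − ‖J⁻¹‖·‖E‖). -/
/-! The error `w = v - v* + d` of the perturbed Newton step solves `(J + E) w = r`, where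
`r = (J(v - v*) - F v) + E(v - v*) - e`. Splitting `J(v - v*) - F v` through `J(v*)` bounds the
first part of `r` by `(α + β) Δ²`, and inverting `J + E` as a perturbation of `J` costs the factor
`‖J⁻¹‖ / (1 - ‖J⁻¹‖ ‖E‖)`. -/

namespace ContinuousLinearMap

variable {𝕜 X Y : Type*} [NontriviallyNormedField 𝕜]
  [SeminormedAddCommGroup X] [NormedSpace 𝕜 X] [SeminormedAddCommGroup Y] [NormedSpace 𝕜 Y]

theorem norm_le_of_comp_eq_id_of_norm_mul_lt_one {A E : X →L[𝕜] Y} {B : Y →L[𝕜] X}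
    (hBA : B.comp A = ContinuousLinearMap.id 𝕜 X) (hBE : ‖B‖ * ‖E‖ < 1) (x : X) :
    ‖x‖ ≤ 1 / (1 - ‖B‖ * ‖E‖) * ‖B‖ * ‖(A + E) x‖ := by
  have hx : x = B ((A + E) x - E x) := by
    simpa using (congrArg (· x) hBA).symm
  have hbound : ‖x‖ ≤ ‖B‖ * ‖(A + E) x‖ + ‖B‖ * ‖E‖ * ‖x‖ :=
    calc ‖x‖ = ‖B ((A + E) x - E x)‖ := congrArg norm hx
      _ ≤ ‖B‖ * (‖(A + E) x‖ + ‖E‖ * ‖x‖) :=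
        B.le_of_opNorm_le_of_le le_rfl ((norm_sub_le _ _).trans (by gcongr; exact E.le_opNorm x))
      _ = ‖B‖ * ‖(A + E) x‖ + ‖B‖ * ‖E‖ * ‖x‖ := by ring
  rw [one_div_mul_eq_div, div_mul_eq_mul_div, le_div_iff₀ (by linarith)]
  nlinarith

theorem norm_apply_sub_le (A A₀ : X →L[𝕜] Y) (h : X) (y : Y) :
    ‖A h - y‖ ≤ ‖A - A₀‖ * ‖h‖ + ‖y - A₀ h‖ :=
  calc ‖A h - y‖ = ‖(A - A₀) h - (y - A₀ h)‖ := by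
        rw [sub_apply]; abel_nf
    _ ≤ ‖(A - A₀) h‖ + ‖y - A₀ h‖ := norm_sub_le _ _
    _ ≤ ‖A - A₀‖ * ‖h‖ + ‖y - A₀ h‖ := by gcongr; exact (A - A₀).le_opNorm h

end ContinuousLinearMap

theorem newton_step_error_bound_general {n : ℕ}
    (F : EuclideanSpace ℂ (Fin n) → EuclideanSpace ℂ (Fin n))
    (vstar : EuclideanSpace ℂ (Fin n))
    (R α β : ℝ)
    (halpha2 : ∀ z : EuclideanSpace ℂ (Fin n), ‖z - vstar‖ ≤ R →
      ‖F z - fderiv ℂ F vstar (z - vstar)‖ ≤ α * ‖z - vstar‖ ^ 2)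
    (hbeta2 : ∀ z : EuclideanSpace ℂ (Fin n), ‖z - vstar‖ ≤ R →
      ‖fderiv ℂ F z - fderiv ℂ F vstar‖ ≤ β * ‖z - vstar‖)
    (v : EuclideanSpace ℂ (Fin n)) (hv : ‖v - vstar‖ ≤ R)
    (Jinv : EuclideanSpace ℂ (Fin n) →L[ℂ] EuclideanSpace ℂ (Fin n))
    (hJ2 : Jinv * fderiv ℂ F v = 1)
    (E : EuclideanSpace ℂ (Fin n) →L[ℂ] EuclideanSpace ℂ (Fin n))
    (hJE : ‖Jinv‖ * ‖E‖ < 1)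
    (e d : EuclideanSpace ℂ (Fin n))
    (hd : (fderiv ℂ F v + E) d = -(F v + e)) :
    ‖v - vstar + d‖ ≤ (1 / (1 - ‖Jinv‖ * ‖E‖)) * ‖Jinv‖ *
      (‖E‖ * ‖v - vstar‖ + (α + β) * ‖v - vstar‖ ^ 2 + ‖e‖) := by
  set J := fderiv ℂ F v
  set Δ := ‖v - vstar‖
  have hresidual : (J + E) (v - vstar + d) = (J (v - vstar) - F v) + E (v - vstar) - e := by
    rw [map_add, hd, add_apply]; abel
  have hlin : ‖J (v - vstar) - F v‖ ≤ (α + β) * Δ ^ 2 :=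
    calc ‖J (v - vstar) - F v‖
        ≤ ‖J - fderiv ℂ F vstar‖ * Δ + ‖F v - fderiv ℂ F vstar (v - vstar)‖ :=
          J.norm_apply_sub_le _ _ _
      _ ≤ β * Δ * Δ + α * Δ ^ 2 := by gcongr; exacts [hbeta2 v hv, halpha2 v hv]
      _ = (α + β) * Δ ^ 2 := by ring
  have hrhs : ‖(J + E) (v - vstar + d)‖ ≤ ‖E‖ * Δ + (α + β) * Δ ^ 2 + ‖e‖ :=
    calc ‖(J + E) (v - vstar + d)‖ ≤ ‖J (v - vstar) - F v‖ + ‖E (v - vstar)‖ + ‖e‖ := by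
          rw [hresidual]; exact norm_sub_le_of_le (norm_add_le _ _) le_rfl
      _ ≤ (α + β) * Δ ^ 2 + ‖E‖ * Δ + ‖e‖ := by gcongr; exact E.le_opNorm _
      _ = ‖E‖ * Δ + (α + β) * Δ ^ 2 + ‖e‖ := by ring
  have hK : 0 ≤ 1 / (1 - ‖Jinv‖ * ‖E‖) * ‖Jinv‖ := by
    have : 0 < 1 - ‖Jinv‖ * ‖E‖ := by linarith
    positivity
  exact (ContinuousLinearMap.norm_le_of_comp_eq_id_of_norm_mul_lt_one hJ2 hJE _).trans
    (mul_le_mul_of_nonneg_left hrhs hK)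

/-- With `Δ = ‖v - v*‖`, `J = fderiv ℂ F v` invertible (inverse `Jinv`), `‖J⁻¹‖ ‖E‖ < 1`,
and `(J + E) d = -(F v + e)`, one has
`‖v - v* + d‖ ≤ K ‖J⁻¹‖ (‖E‖ Δ + (α + β) Δ² + ‖e‖)` where `K = 1/(1 - ‖J⁻¹‖ ‖E‖)`. -/
theorem newton_step_error_bound {n : ℕ}
    (F : EuclideanSpace ℂ (Fin n) → EuclideanSpace ℂ (Fin n))
    (hF : ContDiff ℂ 2 F)
    (vstar : EuclideanSpace ℂ (Fin n)) (hvstar : F vstar = 0)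
    (R α β : ℝ) (hR : 0 < R) (hα : 0 < α) (hβ : 0 < β)
    (halpha1 : ∀ z : EuclideanSpace ℂ (Fin n), ‖z - vstar‖ ≤ R →
      ‖F z‖ ≤ ‖fderiv ℂ F vstar‖ * ‖z - vstar‖ + α * ‖z - vstar‖ ^ 2)
    (halpha2 : ∀ z : EuclideanSpace ℂ (Fin n), ‖z - vstar‖ ≤ R →
      ‖F z - fderiv ℂ F vstar (z - vstar)‖ ≤ α * ‖z - vstar‖ ^ 2)
    (hbeta1 : ∀ z : EuclideanSpace ℂ (Fin n), ‖z - vstar‖ ≤ R →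
      ‖fderiv ℂ F vstar‖ ≤ ‖fderiv ℂ F z‖ + β * ‖z - vstar‖)
    (hbeta2 : ∀ z : EuclideanSpace ℂ (Fin n), ‖z - vstar‖ ≤ R →
      ‖fderiv ℂ F z - fderiv ℂ F vstar‖ ≤ β * ‖z - vstar‖)
    (v : EuclideanSpace ℂ (Fin n)) (hv : ‖v - vstar‖ ≤ R)
    (Jinv : EuclideanSpace ℂ (Fin n) →L[ℂ] EuclideanSpace ℂ (Fin n))
    (hJ1 : fderiv ℂ F v * Jinv = 1) (hJ2 : Jinv * fderiv ℂ F v = 1)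
    (E : EuclideanSpace ℂ (Fin n) →L[ℂ] EuclideanSpace ℂ (Fin n))
    (hJE : ‖Jinv‖ * ‖E‖ < 1)
    (e d : EuclideanSpace ℂ (Fin n))
    (hd : (fderiv ℂ F v + E) d = -(F v + e)) :
    ‖v - vstar + d‖ ≤ (1 / (1 - ‖Jinv‖ * ‖E‖)) * ‖Jinv‖ *
      (‖E‖ * ‖v - vstar‖ + (α + β) * ‖v - vstar‖ ^ 2 + ‖e‖) :=
  newton_step_error_bound_general F vstar R α β halpha2 hbeta2 v hv Jinv hJ2 E hJE e d hd
end

section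
/- Let v lie in the closed ball of radius R centered at v*, write Δ = ‖v − v*‖ and J = J(v), and suppose J is invertible. Let u ≥ 0, ℰ ≥ 0, φ ≥ 0, ψ ≥ 0. Let e ∈ ℂⁿ satisfy ‖e‖ ≤ u‖F(v)‖ + ψ, let E be a continuous linear operator with ‖E‖ ≤ ℰ(u‖J‖ + φ) and ‖J⁻¹‖·‖E‖ < 1, let d satisfy (J + E)d = −(F(v) + e), and let v̄ = v + d + ε where ‖ε‖ ≤ u(‖v‖ + ‖d‖). Then ‖v̄ − v*‖ ≤ K‖J⁻¹‖(1 + u)²(α + β)Δ² + (K‖J⁻¹‖(2 + ℰ + u)(u‖J‖ + φ) + u)Δ + K‖J⁻¹‖(1 + u)ψ + u‖v*‖, where K = 1/(1 − ‖J⁻¹‖·‖E‖). -/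
set_option maxHeartbeats 1000000


/-- Full floating-point error bound for one Newton step (Eq. (12) of the paper):
`‖v̄ - v*‖ ≤ K‖J⁻¹‖(1+u)²(α+β)Δ² + (K‖J⁻¹‖(2+ℰ+u)(u‖J‖+φ) + u)Δ + K‖J⁻¹‖(1+u)ψ + u‖v*‖`. -/
theorem newton_step_floating_point_bound {n : ℕ}
    (F : EuclideanSpace ℂ (Fin n) → EuclideanSpace ℂ (Fin n))
    (hF : ContDiff ℂ 2 F)
    (vstar : EuclideanSpace ℂ (Fin n)) (hvstar : F vstar = 0)
    (R α β : ℝ) (hR : 0 < R) (hα : 0 < α) (hβ : 0 < β)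
    (halpha1 : ∀ z : EuclideanSpace ℂ (Fin n), ‖z - vstar‖ ≤ R →
      ‖F z‖ ≤ ‖fderiv ℂ F vstar‖ * ‖z - vstar‖ + α * ‖z - vstar‖ ^ 2)
    (halpha2 : ∀ z : EuclideanSpace ℂ (Fin n), ‖z - vstar‖ ≤ R →
      ‖F z - fderiv ℂ F vstar (z - vstar)‖ ≤ α * ‖z - vstar‖ ^ 2)
    (hbeta1 : ∀ z : EuclideanSpace ℂ (Fin n), ‖z - vstar‖ ≤ R →
      ‖fderiv ℂ F vstar‖ ≤ ‖fderiv ℂ F z‖ + β * ‖z - vstar‖)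
    (hbeta2 : ∀ z : EuclideanSpace ℂ (Fin n), ‖z - vstar‖ ≤ R →
      ‖fderiv ℂ F z - fderiv ℂ F vstar‖ ≤ β * ‖z - vstar‖)
    (v : EuclideanSpace ℂ (Fin n)) (hv : ‖v - vstar‖ ≤ R)
    (Jinv : EuclideanSpace ℂ (Fin n) →L[ℂ] EuclideanSpace ℂ (Fin n))
    (hJ1 : fderiv ℂ F v * Jinv = 1) (hJ2 : Jinv * fderiv ℂ F v = 1)
    (u ℰ φ ψ : ℝ) (hu : 0 ≤ u) (hℰ : 0 ≤ ℰ) (hφ : 0 ≤ φ) (hψ : 0 ≤ ψ)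
    (e : EuclideanSpace ℂ (Fin n)) (he : ‖e‖ ≤ u * ‖F v‖ + ψ)
    (E : EuclideanSpace ℂ (Fin n) →L[ℂ] EuclideanSpace ℂ (Fin n))
    (hE : ‖E‖ ≤ ℰ * (u * ‖fderiv ℂ F v‖ + φ))
    (hJE : ‖Jinv‖ * ‖E‖ < 1)
    (d : EuclideanSpace ℂ (Fin n))
    (hd : (fderiv ℂ F v + E) d = -(F v + e))
    (ε vbar : EuclideanSpace ℂ (Fin n))
    (hε : ‖ε‖ ≤ u * (‖v‖ + ‖d‖))
    (hvbar : vbar = v + d + ε) :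
    ‖vbar - vstar‖ ≤
      (1 / (1 - ‖Jinv‖ * ‖E‖)) * ‖Jinv‖ * (1 + u) ^ 2 * (α + β) * ‖v - vstar‖ ^ 2 +
      ((1 / (1 - ‖Jinv‖ * ‖E‖)) * ‖Jinv‖ * ((2 + ℰ + u) * (u * ‖fderiv ℂ F v‖ + φ)) + u) *
        ‖v - vstar‖ +
      (1 / (1 - ‖Jinv‖ * ‖E‖)) * ‖Jinv‖ * (1 + u) * ψ + u * ‖vstar‖ := by
  classical
  set J := fderiv ℂ F v with hJdef
  set Js := fderiv ℂ F vstar with hJsdef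
  have hk : 0 < 1 - ‖Jinv‖ * ‖E‖ := by linarith
  set Δ := ‖v - vstar‖ with hΔdef
  have hΔ0 : 0 ≤ Δ := norm_nonneg _
  have hJinv0 : (0:ℝ) ≤ ‖Jinv‖ := norm_nonneg _
  -- identity Jinv ∘ J = id
  have hdid : ∀ x : EuclideanSpace ℂ (Fin n), Jinv (J x) = x := by
    intro x
    have h := ContinuousLinearMap.ext_iff.mp hJ2 x
    simpa [ContinuousLinearMap.mul_apply] using h
  -- linearization bound
  have hlin : ‖J (v - vstar) - F v‖ ≤ (α + β) * Δ ^ 2 := by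
    have h1 := halpha2 v hv
    have h2 := hbeta2 v hv
    have h3 : ‖(J - Js) (v - vstar)‖ ≤ β * Δ * Δ :=
      le_trans ((J - Js).le_opNorm _) (mul_le_mul_of_nonneg_right h2 hΔ0)
    have heq : J (v - vstar) - F v = (J - Js) (v - vstar) - (F v - Js (v - vstar)) := by
      simp [ContinuousLinearMap.sub_apply]
    rw [heq]
    calc ‖(J - Js) (v - vstar) - (F v - Js (v - vstar))‖
        ≤ ‖(J - Js) (v - vstar)‖ + ‖F v - Js (v - vstar)‖ := norm_sub_le _ _
      _ ≤ β * Δ * Δ + α * Δ ^ 2 := add_le_add h3 h1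
      _ = (α + β) * Δ ^ 2 := by ring
  -- bound for ‖F v‖
  have hFv : ‖F v‖ ≤ ‖J‖ * Δ + (α + β) * Δ ^ 2 := by
    have h1 := halpha1 v hv
    have h2 := hbeta1 v hv
    nlinarith [mul_le_mul_of_nonneg_right h2 hΔ0]
  -- J d equation
  have h0 : J d + E d = -(F v + e) := by
    rw [← ContinuousLinearMap.add_apply]; exact hd
  have hJd : J d = -(F v) - e - E d := by
    have := eq_sub_of_add_eq h0
    rw [this]; abel
  -- bound for ‖d‖
  have hdn : ‖d‖ * (1 - ‖Jinv‖ * ‖E‖) ≤ ‖Jinv‖ * (‖F v‖ + ‖e‖) := by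
    have h1 : d = Jinv (-(F v) - e - E d) := by
      rw [← hJd]; exact (hdid d).symm
    have h2 : ‖-(F v) - e - E d‖ ≤ ‖F v‖ + ‖e‖ + ‖E‖ * ‖d‖ := by
      calc ‖-(F v) - e - E d‖ ≤ ‖-(F v) - e‖ + ‖E d‖ := norm_sub_le _ _
        _ ≤ (‖F v‖ + ‖e‖) + ‖E‖ * ‖d‖ := by
            refine add_le_add (le_trans (norm_sub_le _ _) ?_) (E.le_opNorm d)
            simp
    have h3 : ‖d‖ ≤ ‖Jinv‖ * (‖F v‖ + ‖e‖ + ‖E‖ * ‖d‖) := by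
      calc ‖d‖ = ‖Jinv (-(F v) - e - E d)‖ := by rw [← h1]
        _ ≤ ‖Jinv‖ * ‖-(F v) - e - E d‖ := Jinv.le_opNorm _
        _ ≤ ‖Jinv‖ * (‖F v‖ + ‖e‖ + ‖E‖ * ‖d‖) :=
            mul_le_mul_of_nonneg_left h2 hJinv0
    linarith [h3]
  -- bound for ‖w‖ where w = v + d - vstar
  set w := v + d - vstar with hwdef
  have hJw : J w = J (v - vstar) - F v - e - E d := by
    have hsplit : w = (v - vstar) + d := by rw [hwdef]; abel
    rw [hsplit, map_add, hJd]; abel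
  have hwid : w = Jinv (J (v - vstar) - F v - e - E d) := by
    rw [← hJw]; exact (hdid w).symm
  have hd_le : ‖d‖ ≤ ‖w‖ + Δ := by
    have hde : d = w - (v - vstar) := by rw [hwdef]; abel
    calc ‖d‖ = ‖w - (v - vstar)‖ := by rw [← hde]
      _ ≤ ‖w‖ + ‖v - vstar‖ := norm_sub_le _ _
  have hwn : ‖w‖ * (1 - ‖Jinv‖ * ‖E‖) ≤
      ‖Jinv‖ * ((α + β) * Δ ^ 2 + ‖e‖ + ‖E‖ * Δ) := by
    have h2 : ‖J (v - vstar) - F v - e - E d‖ ≤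
        (α + β) * Δ ^ 2 + ‖e‖ + ‖E‖ * (‖w‖ + Δ) := by
      calc ‖J (v - vstar) - F v - e - E d‖
          ≤ ‖J (v - vstar) - F v - e‖ + ‖E d‖ := norm_sub_le _ _
        _ ≤ (‖J (v - vstar) - F v‖ + ‖e‖) + ‖E‖ * (‖w‖ + Δ) := by
            refine add_le_add (norm_sub_le _ _) ?_
            exact le_trans (E.le_opNorm d) (mul_le_mul_of_nonneg_left hd_le (norm_nonneg E))
        _ ≤ (α + β) * Δ ^ 2 + ‖e‖ + ‖E‖ * (‖w‖ + Δ) := by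
            have := hlin; linarith
    have h3 : ‖w‖ ≤ ‖Jinv‖ * ((α + β) * Δ ^ 2 + ‖e‖ + ‖E‖ * (‖w‖ + Δ)) := by
      calc ‖w‖ = ‖Jinv (J (v - vstar) - F v - e - E d)‖ := by rw [← hwid]
        _ ≤ ‖Jinv‖ * ‖J (v - vstar) - F v - e - E d‖ := Jinv.le_opNorm _
        _ ≤ _ := mul_le_mul_of_nonneg_left h2 hJinv0
    linarith [h3]
  -- total bound
  have hT : ‖vbar - vstar‖ ≤ ‖w‖ + u * (Δ + ‖vstar‖ + ‖d‖) := by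
    have h1 : vbar - vstar = w + ε := by rw [hvbar, hwdef]; abel
    have h2 : ‖v‖ ≤ Δ + ‖vstar‖ := by
      calc ‖v‖ = ‖(v - vstar) + vstar‖ := by congr 1; abel
        _ ≤ ‖v - vstar‖ + ‖vstar‖ := norm_add_le _ _
    have h3 : ‖ε‖ ≤ u * (Δ + ‖vstar‖ + ‖d‖) := by
      refine le_trans hε ?_
      have : ‖v‖ + ‖d‖ ≤ Δ + ‖vstar‖ + ‖d‖ := by linarith
      exact mul_le_mul_of_nonneg_left this hu
    calc ‖vbar - vstar‖ = ‖w + ε‖ := by rw [h1]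
      _ ≤ ‖w‖ + ‖ε‖ := norm_add_le _ _
      _ ≤ _ := by linarith
  -- key multiplied inequality
  have key : ‖vbar - vstar‖ * (1 - ‖Jinv‖ * ‖E‖) ≤
      ‖Jinv‖ * ((1 + u) ^ 2 * (α + β) * Δ ^ 2 + (2 + ℰ + u) * (u * ‖J‖ + φ) * Δ
        + (1 + u) * ψ) + (1 - ‖Jinv‖ * ‖E‖) * (u * Δ + u * ‖vstar‖) := by
    have P0 := mul_le_mul_of_nonneg_right hT hk.le
    have P5 := mul_le_mul_of_nonneg_left hdn hu
    have P1 := mul_le_mul_of_nonneg_left he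
      (by positivity : (0:ℝ) ≤ ‖Jinv‖ * (1 + u))
    have P2 := mul_le_mul_of_nonneg_left hFv
      (by positivity : (0:ℝ) ≤ ‖Jinv‖ * (u * (2 + u)))
    have P3 := mul_le_mul_of_nonneg_right (mul_le_mul_of_nonneg_left hE hJinv0) hΔ0
    have P4 : (0:ℝ) ≤ ‖Jinv‖ * ((2 + u) * Δ * φ) := by positivity
    nlinarith [hwn, P0, P5, P1, P2, P3, P4]
  have final : ‖vbar - vstar‖ ≤
      (‖Jinv‖ * ((1 + u) ^ 2 * (α + β) * Δ ^ 2 + (2 + ℰ + u) * (u * ‖J‖ + φ) * Δ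
        + (1 + u) * ψ) + (1 - ‖Jinv‖ * ‖E‖) * (u * Δ + u * ‖vstar‖)) /
        (1 - ‖Jinv‖ * ‖E‖) := (le_div_iff₀ hk).mpr key
  refine le_trans final (le_of_eq ?_)
  rw [div_eq_iff hk.ne']
  have h1 : (1 / (1 - ‖Jinv‖ * ‖E‖)) * (1 - ‖Jinv‖ * ‖E‖) = 1 :=
    one_div_mul_cancel hk.ne'
  linear_combination (-‖Jinv‖ * ((1 + u) ^ 2 * (α + β) * Δ ^ 2 +
    (2 + ℰ + u) * (u * ‖J‖ + φ) * Δ + (1 + u) * ψ)) * h1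
end

section
/- Let v lie in the closed ball of radius R centered at v*, suppose J(v) is invertible, and suppose 0 < ‖v − v*‖ < 1/(‖J(v)⁻¹‖·(α + β)). Then the exact Newton iterate v̄ = v − J(v)⁻¹·F(v) satisfies ‖v̄ − v*‖ < ‖v − v*‖; that is, the Newton step strictly reduces the error in the approximation of the root. -/
/-- If `0 < ‖v - v*‖ < 1/(‖J(v)⁻¹‖(α + β))`, then the exact Newton iterate
`v̄ = v - J(v)⁻¹ F(v)` satisfies `‖v̄ - v*‖ < ‖v - v*‖`: the Newton step strictly
reduces the error in the approximation of the root. -/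
theorem exact_newton_contracts {n : ℕ}
    (F : EuclideanSpace ℂ (Fin n) → EuclideanSpace ℂ (Fin n))
    (hF : ContDiff ℂ 2 F)
    (vstar : EuclideanSpace ℂ (Fin n)) (hvstar : F vstar = 0)
    (R α β : ℝ) (hR : 0 < R) (hα : 0 < α) (hβ : 0 < β)
    (halpha2 : ∀ z : EuclideanSpace ℂ (Fin n), ‖z - vstar‖ ≤ R →
      ‖F z - fderiv ℂ F vstar (z - vstar)‖ ≤ α * ‖z - vstar‖ ^ 2)
    (hbeta2 : ∀ z : EuclideanSpace ℂ (Fin n), ‖z - vstar‖ ≤ R →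
      ‖fderiv ℂ F z - fderiv ℂ F vstar‖ ≤ β * ‖z - vstar‖)
    (v : EuclideanSpace ℂ (Fin n)) (hv : ‖v - vstar‖ ≤ R)
    (Jinv : EuclideanSpace ℂ (Fin n) →L[ℂ] EuclideanSpace ℂ (Fin n))
    (hJ1 : fderiv ℂ F v * Jinv = 1) (hJ2 : Jinv * fderiv ℂ F v = 1)
    (hΔpos : 0 < ‖v - vstar‖)
    (hΔsmall : ‖v - vstar‖ < 1 / (‖Jinv‖ * (α + β)))
    (vbar : EuclideanSpace ℂ (Fin n))
    (hvbar : vbar = v - Jinv (F v)) :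
    ‖vbar - vstar‖ < ‖v - vstar‖ := by
  set e := v - vstar with he
  set J := fderiv ℂ F v with hJdef
  set Js := fderiv ℂ F vstar with hJsdef
  -- positivity of the constant
  have hc : 0 < ‖Jinv‖ * (α + β) := by
    rcases lt_or_eq_of_le (mul_nonneg (norm_nonneg Jinv) (by linarith : (0:ℝ) ≤ α + β)) with h | h
    · exact h
    · exfalso
      rw [← h] at hΔsmall
      simp at hΔsmall
      linarith
  -- key identity
  have hkey : vbar - vstar = Jinv (J e - F v) := by
    have h1 : Jinv (J e) = e := by
      have := congrArg (fun T : EuclideanSpace ℂ (Fin n) →L[ℂ] EuclideanSpace ℂ (Fin n) => T e) hJ2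
      simpa using this
    rw [hvbar]
    rw [map_sub, h1, he]
    abel
  have hbound : ‖J e - F v‖ ≤ (α + β) * ‖e‖ ^ 2 := by
    have h1 : ‖Js e - F v‖ ≤ α * ‖e‖ ^ 2 := by
      have := halpha2 v hv
      rwa [norm_sub_rev] at this
    have h2 : ‖J e - Js e‖ ≤ β * ‖e‖ ^ 2 := by
      have h3 : ‖J e - Js e‖ ≤ ‖J - Js‖ * ‖e‖ := by
        have := (J - Js).le_opNorm e
        rwa [ContinuousLinearMap.sub_apply] at this
      have h4 := hbeta2 v hv
      calc ‖J e - Js e‖ ≤ ‖J - Js‖ * ‖e‖ := h3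
        _ ≤ (β * ‖e‖) * ‖e‖ := by
            apply mul_le_mul_of_nonneg_right h4 (norm_nonneg _)
        _ = β * ‖e‖ ^ 2 := by ring
    calc ‖J e - F v‖ = ‖(J e - Js e) + (Js e - F v)‖ := by congr 1; abel
      _ ≤ ‖J e - Js e‖ + ‖Js e - F v‖ := norm_add_le _ _
      _ ≤ β * ‖e‖ ^ 2 + α * ‖e‖ ^ 2 := add_le_add h2 h1
      _ = (α + β) * ‖e‖ ^ 2 := by ring
  have hsmall : ‖Jinv‖ * (α + β) * ‖e‖ < 1 := by
    rw [lt_div_iff₀ hc] at hΔsmall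
    linarith [hΔsmall]
  calc ‖vbar - vstar‖ = ‖Jinv (J e - F v)‖ := by rw [hkey]
    _ ≤ ‖Jinv‖ * ‖J e - F v‖ := Jinv.le_opNorm _
    _ ≤ ‖Jinv‖ * ((α + β) * ‖e‖ ^ 2) :=
        mul_le_mul_of_nonneg_left hbound (norm_nonneg _)
    _ = (‖Jinv‖ * (α + β) * ‖e‖) * ‖e‖ := by ring
    _ < 1 * ‖e‖ := by exact mul_lt_mul_of_pos_right hsmall hΔpos
    _ = ‖e‖ := one_mul _
end
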